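/- Let s, η be smooth scalar fields on ℝ × ℝ³ with zero material derivative along a smooth velocity field v (ds/dt = dη/dt = 0), let ρ > 0 satisfy the continuity equation ∂ρ/∂t + div(ρv) = 0, and let f : ℝ² → ℝ be smooth. Then the vector field ξ := ρ⁻¹ f(s,η) (grad s × grad η) has zero Lie derivative with respect to v: ∂ξ/∂t + (∂ξ/∂x)v − (∂v/∂x)ξ = 0. -/

import Mathlib

open Matrix
open scoped Matrix
open ContinuousLinearMap

/-- partial time derivative of a time-dependent vector field -/
noncomputable def dtv (f : ℝ × (Fin 3 → ℝ) → (Fin 3 → ℝ)) (p : ℝ × (Fin 3 → ℝ)) : Fin 3 → ℝ :=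
  deriv (fun s => f (s, p.2)) p.1

/-- spatial Jacobian applied to a vector -/
noncomputable def dxv (f : ℝ × (Fin 3 → ℝ) → (Fin 3 → ℝ)) (p : ℝ × (Fin 3 → ℝ))
    (u : Fin 3 → ℝ) : Fin 3 → ℝ :=
  fderiv ℝ (fun y => f (p.1, y)) p.2 u

/-- spatial gradient of a scalar field -/
noncomputable def grads (f : ℝ × (Fin 3 → ℝ) → ℝ) (p : ℝ × (Fin 3 → ℝ)) : Fin 3 → ℝ :=
  fun i => fderiv ℝ (fun y => f (p.1, y)) p.2 (Pi.single i 1)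

/-- spatial divergence of a time-dependent vector field -/
noncomputable def sdiv (f : ℝ × (Fin 3 → ℝ) → (Fin 3 → ℝ)) (p : ℝ × (Fin 3 → ℝ)) : ℝ :=
  ∑ i, fderiv ℝ (fun y => f (p.1, y)) p.2 (Pi.single i 1) i

/-- material derivative of a scalar field: ∂/∂t + v·∇ -/
noncomputable def matDt (v : ℝ × (Fin 3 → ℝ) → (Fin 3 → ℝ))
    (f : ℝ × (Fin 3 → ℝ) → ℝ) (p : ℝ × (Fin 3 → ℝ)) : ℝ :=
  deriv (fun s => f (s, p.2)) p.1 + grads f p ⬝ᵥ v p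



noncomputable section stmt10aux

variable {F' : Type*} [NormedAddCommGroup F'] [NormedSpace ℝ F']

lemma decomp0 (u : Fin 3 → ℝ) :
    ((0:ℝ), u) = ∑ i : Fin 3, u i • ((0:ℝ), (Pi.single i 1 : Fin 3 → ℝ)) := by
  rw [Fin.sum_univ_three]
  refine Prod.ext (by simp) ?_
  funext j
  fin_cases j <;> simp [Pi.single_apply]

lemma apply0 (L : (ℝ × (Fin 3 → ℝ)) →L[ℝ] F') (u : Fin 3 → ℝ) :
    L ((0:ℝ), u) = ∑ i : Fin 3, u i • L ((0:ℝ), Pi.single i 1) := by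
  rw [decomp0 u, map_sum]
  refine Finset.sum_congr rfl fun i _ => ?_
  exact L.map_smul _ _

lemma slice_x {g : ℝ × (Fin 3 → ℝ) → F'} {L : (ℝ × (Fin 3 → ℝ)) →L[ℝ] F'}
    {p : ℝ × (Fin 3 → ℝ)} (h : HasFDerivAt g L p) :
    HasFDerivAt (fun y => g (p.1, y))
      (L.comp (ContinuousLinearMap.inr ℝ ℝ (Fin 3 → ℝ))) p.2 := by
  have h' : HasFDerivAt g L (p.1, p.2) := by rw [Prod.mk.eta]; exact h
  exact h'.comp p.2 (hasFDerivAt_prodMk_right p.1 p.2)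

lemma slice_t {g : ℝ × (Fin 3 → ℝ) → F'} {L : (ℝ × (Fin 3 → ℝ)) →L[ℝ] F'}
    {p : ℝ × (Fin 3 → ℝ)} (h : HasFDerivAt g L p) :
    HasDerivAt (fun t => g (t, p.2)) (L ((1:ℝ), (0 : Fin 3 → ℝ))) p.1 := by
  have h' : HasFDerivAt g L (p.1, p.2) := by rw [Prod.mk.eta]; exact h
  have h1 : HasDerivAt (fun t : ℝ => (t, p.2)) ((1:ℝ), (0 : Fin 3 → ℝ)) p.1 :=
    (hasDerivAt_id p.1).prodMk (hasDerivAt_const p.1 p.2)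
  exact h'.comp_hasDerivAt p.1 h1


lemma dtv_eq {g : ℝ × (Fin 3 → ℝ) → (Fin 3 → ℝ)} {L : (ℝ × (Fin 3 → ℝ)) →L[ℝ] (Fin 3 → ℝ)} {p : ℝ × (Fin 3 → ℝ)} (h : HasFDerivAt g L p) :
    dtv g p = L ((1:ℝ), (0 : Fin 3 → ℝ)) := (slice_t h).deriv

lemma dxv_eq {g : ℝ × (Fin 3 → ℝ) → (Fin 3 → ℝ)} {L : (ℝ × (Fin 3 → ℝ)) →L[ℝ] (Fin 3 → ℝ)} {p : ℝ × (Fin 3 → ℝ)} (h : HasFDerivAt g L p)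
    (u : Fin 3 → ℝ) : dxv g p u = L ((0:ℝ), u) := by
  unfold dxv
  rw [(slice_x h).fderiv]
  simp

lemma grads_eq {g : ℝ × (Fin 3 → ℝ) → ℝ} {L : (ℝ × (Fin 3 → ℝ)) →L[ℝ] ℝ} {p : ℝ × (Fin 3 → ℝ)} (h : HasFDerivAt g L p) :
    grads g p = fun i => L ((0:ℝ), Pi.single i 1) := by
  funext i
  unfold grads
  rw [(slice_x h).fderiv]
  simp

lemma sdiv_eq {g : ℝ × (Fin 3 → ℝ) → (Fin 3 → ℝ)} {L : (ℝ × (Fin 3 → ℝ)) →L[ℝ] (Fin 3 → ℝ)} {p : ℝ × (Fin 3 → ℝ)} (h : HasFDerivAt g L p) :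
    sdiv g p = ∑ i : Fin 3, L ((0:ℝ), Pi.single i 1) i := by
  unfold sdiv
  rw [(slice_x h).fderiv]
  simp

lemma matDt_eq {v : ℝ × (Fin 3 → ℝ) → (Fin 3 → ℝ)} {g : ℝ × (Fin 3 → ℝ) → ℝ} {L : (ℝ × (Fin 3 → ℝ)) →L[ℝ] ℝ} {p : ℝ × (Fin 3 → ℝ)}
    (h : HasFDerivAt g L p) : matDt v g p = L ((1:ℝ), v p) := by
  unfold matDt
  rw [(slice_t h).deriv, grads_eq h]
  have h1 : ((1:ℝ), v p) = ((1:ℝ), (0 : Fin 3 → ℝ)) + ((0:ℝ), v p) := by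
    simp
  rw [h1, map_add, apply0]
  simp [dotProduct, mul_comm]

/-- transport of the differential of a material invariant -/
lemma transport {g : ℝ × (Fin 3 → ℝ) → ℝ} {v : ℝ × (Fin 3 → ℝ) → (Fin 3 → ℝ)}
    (hg : ContDiff ℝ (⊤ : ℕ∞) g) (hv : ContDiff ℝ (⊤ : ℕ∞) v)
    (hinv : ∀ p, matDt v g p = 0) (p : ℝ × (Fin 3 → ℝ)) (u : Fin 3 → ℝ) :
    fderiv ℝ (fderiv ℝ g) p ((1:ℝ), v p) ((0:ℝ), u) =
      - fderiv ℝ g p ((0:ℝ), fderiv ℝ v p ((0:ℝ), u)) := by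
  have hg' : ∀ q, HasFDerivAt g (fderiv ℝ g q) q := fun q =>
    (hg.differentiable (by simp) q).hasFDerivAt
  have hv' : HasFDerivAt v (fderiv ℝ v p) p := (hv.differentiable (by simp) p).hasFDerivAt
  have hG2 : HasFDerivAt (fderiv ℝ g) (fderiv ℝ (fderiv ℝ g) p) p :=
    (((hg.fderiv_right (m := (⊤ : ℕ∞)) (by simp)).differentiable (by simp)) p).hasFDerivAt
  have hsym := second_derivative_symmetric hg' hG2
  have hWd : HasFDerivAt (fun q => ((1:ℝ), v q))
      ((0 : (ℝ × (Fin 3 → ℝ)) →L[ℝ] ℝ).prod (fderiv ℝ v p)) p :=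
    (hasFDerivAt_const (1:ℝ) p).prodMk hv'
  have hF := hG2.clm_apply hWd
  have h0 : HasFDerivAt (fun q => fderiv ℝ g q ((1:ℝ), v q))
      (0 : (ℝ × (Fin 3 → ℝ)) →L[ℝ] ℝ) p := by
    have he : (fun q => fderiv ℝ g q ((1:ℝ), v q)) = fun _ => (0:ℝ) := by
      funext q
      rw [← matDt_eq (hg' q)]
      exact hinv q
    rw [he]
    exact hasFDerivAt_const 0 p
  have huniq := hF.unique h0
  have happ := congrArg (fun (M : (ℝ × (Fin 3 → ℝ)) →L[ℝ] ℝ) => M ((0:ℝ), u)) huniq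
  simp only [ContinuousLinearMap.add_apply, ContinuousLinearMap.coe_comp',
    Function.comp_apply, ContinuousLinearMap.flip_apply, ContinuousLinearMap.prod_apply,
    ContinuousLinearMap.zero_apply] at happ
  rw [hsym ((1:ℝ), v p) ((0:ℝ), u)]
  linarith

end stmt10aux

set_option maxHeartbeats 2000000 in
/-- for material invariants `s, η`, a density `ρ > 0` satisfying the
continuity equation, and smooth `f`, the vector field
`ξ := ρ⁻¹ f(s,η) (grad s × grad η)` has zero Lie derivative with respect to `v`. -/
theorem stmt10
    (ρ : ℝ × (Fin 3 → ℝ) → ℝ) (v : ℝ × (Fin 3 → ℝ) → (Fin 3 → ℝ))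
    (s η : ℝ × (Fin 3 → ℝ) → ℝ) (f : ℝ × ℝ → ℝ)
    (hρ : ContDiff ℝ (⊤ : ℕ∞) ρ) (hρpos : ∀ p, 0 < ρ p)
    (hv : ContDiff ℝ (⊤ : ℕ∞) v) (hs : ContDiff ℝ (⊤ : ℕ∞) s) (hη : ContDiff ℝ (⊤ : ℕ∞) η)
    (hf : ContDiff ℝ (⊤ : ℕ∞) f)
    (hcont : ∀ p, deriv (fun t => ρ (t, p.2)) p.1 + sdiv (fun q => ρ q • v q) p = 0)
    (hsinv : ∀ p, matDt v s p = 0) (hηinv : ∀ p, matDt v η p = 0)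
    (ξ : ℝ × (Fin 3 → ℝ) → (Fin 3 → ℝ))
    (hξ : ∀ p, ξ p = (ρ p)⁻¹ • (f (s p, η p) • crossProduct (grads s p) (grads η p))) :
    ∀ p, dtv ξ p + dxv ξ p (v p) - dxv v p (ξ p) = 0 := by
  have hsd : ∀ q, HasFDerivAt s (fderiv ℝ s q) q := fun q =>
    (hs.differentiable (by simp) q).hasFDerivAt
  have hηd : ∀ q, HasFDerivAt η (fderiv ℝ η q) q := fun q =>
    (hη.differentiable (by simp) q).hasFDerivAt
  have hρd : ∀ q, HasFDerivAt ρ (fderiv ℝ ρ q) q := fun q =>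
    (hρ.differentiable (by simp) q).hasFDerivAt
  have hvd : ∀ q, HasFDerivAt v (fderiv ℝ v q) q := fun q =>
    (hv.differentiable (by simp) q).hasFDerivAt
  have hfd : ∀ z, HasFDerivAt f (fderiv ℝ f z) z := fun z =>
    (hf.differentiable (by simp) z).hasFDerivAt
  set g : ℝ × (Fin 3 → ℝ) → ℝ := fun q => (ρ q)⁻¹ * f (s q, η q) with hgdef
  have hgC : ContDiff ℝ (⊤ : ℕ∞) g := (hρ.inv fun q => (hρpos q).ne').mul (hf.comp (hs.prodMk hη))
  have hgd : ∀ q, HasFDerivAt g (fderiv ℝ g q) q := fun q =>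
    (hgC.differentiable (by simp) q).hasFDerivAt
  set a : ℝ × (Fin 3 → ℝ) → Fin 3 → ℝ := fun q i => fderiv ℝ s q ((0:ℝ), Pi.single i 1)
    with hadef
  set b : ℝ × (Fin 3 → ℝ) → Fin 3 → ℝ := fun q i => fderiv ℝ η q ((0:ℝ), Pi.single i 1)
    with hbdef
  have hξΞ : ξ = fun q => g q • (crossProduct (a q) (b q)) := by
    funext q
    rw [hξ q, grads_eq (hsd q), grads_eq (hηd q), smul_smul]
  subst hξΞ
  intro p
  have hS2 : HasFDerivAt (fderiv ℝ s) (fderiv ℝ (fderiv ℝ s) p) p :=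
    (((hs.fderiv_right (m := (⊤ : ℕ∞)) (by simp)).differentiable (by simp)) p).hasFDerivAt
  have hT2 : HasFDerivAt (fderiv ℝ η) (fderiv ℝ (fderiv ℝ η) p) p :=
    (((hη.fderiv_right (m := (⊤ : ℕ∞)) (by simp)).differentiable (by simp)) p).hasFDerivAt
  -- component derivatives of the gradient fields
  have haC : ∀ i, HasFDerivAt (fun q => a q i)
      ((fderiv ℝ (fderiv ℝ s) p).flip ((0:ℝ), Pi.single i 1)) p := by
    intro i
    have := hS2.clm_apply (hasFDerivAt_const (((0:ℝ), (Pi.single i 1 : Fin 3 → ℝ))) p)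
    simpa [hadef] using this
  have hbC : ∀ i, HasFDerivAt (fun q => b q i)
      ((fderiv ℝ (fderiv ℝ η) p).flip ((0:ℝ), Pi.single i 1)) p := by
    intro i
    have := hT2.clm_apply (hasFDerivAt_const (((0:ℝ), (Pi.single i 1 : Fin 3 → ℝ))) p)
    simpa [hbdef] using this
  set A : Fin 3 → (ℝ × (Fin 3 → ℝ)) →L[ℝ] ℝ :=
    fun i => (fderiv ℝ (fderiv ℝ s) p).flip ((0:ℝ), Pi.single i 1) with hAdef
  set B : Fin 3 → (ℝ × (Fin 3 → ℝ)) →L[ℝ] ℝ :=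
    fun i => (fderiv ℝ (fderiv ℝ η) p).flip ((0:ℝ), Pi.single i 1) with hBdef
  set Lc : Fin 3 → (ℝ × (Fin 3 → ℝ)) →L[ℝ] ℝ :=
    ![a p 1 • B 2 + b p 2 • A 1 - (a p 2 • B 1 + b p 1 • A 2),
      a p 2 • B 0 + b p 0 • A 2 - (a p 0 • B 2 + b p 2 • A 0),
      a p 0 • B 1 + b p 1 • A 0 - (a p 1 • B 0 + b p 0 • A 1)] with hLcdef
  have hc : HasFDerivAt (fun q => crossProduct (a q) (b q)) (ContinuousLinearMap.pi Lc) p := by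
    rw [hasFDerivAt_pi']
    intro i
    have he : ∀ i, (ContinuousLinearMap.proj i).comp (ContinuousLinearMap.pi Lc) = Lc i := by
      intro i; ext w <;> simp
    rw [he]
    fin_cases i
    · convert ((haC 1).mul (hbC 2)).sub ((haC 2).mul (hbC 1)) using 2 <;> rfl
    · convert ((haC 2).mul (hbC 0)).sub ((haC 0).mul (hbC 2)) using 2 <;> rfl
    · convert ((haC 0).mul (hbC 1)).sub ((haC 1).mul (hbC 0)) using 2 <;> rfl
  have hΞ' : HasFDerivAt (fun q => g q • (crossProduct (a q) (b q)))
      (g p • ContinuousLinearMap.pi Lc + (fderiv ℝ g p).smulRight (crossProduct (a p) (b p))) p :=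
    (hgd p).smul hc
  rw [dtv_eq hΞ', dxv_eq hΞ' (v p), dxv_eq (hvd p)]
  beta_reduce
  have hsplit : (g p • ContinuousLinearMap.pi Lc
        + (fderiv ℝ g p).smulRight (crossProduct (a p) (b p))) ((1:ℝ), (0 : Fin 3 → ℝ))
      + (g p • ContinuousLinearMap.pi Lc
        + (fderiv ℝ g p).smulRight (crossProduct (a p) (b p))) ((0:ℝ), v p)
      = (g p • ContinuousLinearMap.pi Lc
        + (fderiv ℝ g p).smulRight (crossProduct (a p) (b p))) ((1:ℝ), v p) := by
    rw [← map_add, Prod.mk_add_mk, add_zero, zero_add]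
  rw [hsplit, sub_eq_zero]
  -- scalar facts
  have hDsW : fderiv ℝ s p ((1:ℝ), v p) = 0 := by rw [← matDt_eq (hsd p)]; exact hsinv p
  have hDηW : fderiv ℝ η p ((1:ℝ), v p) = 0 := by rw [← matDt_eq (hηd p)]; exact hηinv p
  have hDρW : fderiv ℝ ρ p ((1:ℝ), v p) =
      -(ρ p * ∑ i : Fin 3, fderiv ℝ v p ((0:ℝ), Pi.single i 1) i) := by
    have hc0 := hcont p
    rw [(slice_t (hρd p)).deriv, sdiv_eq (g := fun q => ρ q • v q) ((hρd p).smul (hvd p))] at hc0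
    have hWsplit : fderiv ℝ ρ p ((1:ℝ), v p)
        = fderiv ℝ ρ p ((1:ℝ), (0:Fin 3 → ℝ)) + fderiv ℝ ρ p ((0:ℝ), v p) := by
      rw [← map_add, Prod.mk_add_mk, add_zero, zero_add]
    rw [hWsplit, apply0 (fderiv ℝ ρ p) (v p)]
    simp only [ContinuousLinearMap.add_apply, ContinuousLinearMap.smul_apply,
      ContinuousLinearMap.smulRight_apply, Pi.add_apply, Pi.smul_apply, smul_eq_mul,
      Fin.sum_univ_three] at hc0 ⊢
    linarith
  have hDgW : fderiv ℝ g p ((1:ℝ), v p)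
      = g p * ∑ i : Fin 3, fderiv ℝ v p ((0:ℝ), Pi.single i 1) i := by
    have hrg : (fun q => ρ q * g q) = fun q => f (s q, η q) := by
      funext q
      rw [hgdef, ← mul_assoc, mul_inv_cancel₀ (hρpos q).ne', one_mul]
    have h1 : HasFDerivAt (fun q => ρ q * g q)
        (ρ p • fderiv ℝ g p + g p • fderiv ℝ ρ p) p := (hρd p).mul (hgd p)
    rw [hrg] at h1
    have h2 : HasFDerivAt (fun q => f (s q, η q))
        ((fderiv ℝ f (s p, η p)).comp ((fderiv ℝ s p).prod (fderiv ℝ η p))) p :=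
      (hfd (s p, η p)).comp p ((hsd p).prodMk ((hηd p)))
    have happ := congrArg (fun (M : (ℝ × (Fin 3 → ℝ)) →L[ℝ] ℝ) => M ((1:ℝ), v p))
      (h1.unique h2)
    simp only [ContinuousLinearMap.add_apply, ContinuousLinearMap.smul_apply, smul_eq_mul,
      ContinuousLinearMap.coe_comp', Function.comp_apply,
      ContinuousLinearMap.prod_apply] at happ
    rw [hDsW, hDηW, hDρW] at happ
    have hz : (((0:ℝ), (0:ℝ)) : ℝ × ℝ) = 0 := rfl
    rw [hz, map_zero] at happ
    apply mul_left_cancel₀ (hρpos p).ne'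
    linear_combination happ
  -- transport of gradients, in expanded form
  have hKS : ∀ j : Fin 3, fderiv ℝ (fderiv ℝ s) p ((1:ℝ), v p) ((0:ℝ), Pi.single j 1)
      = - ∑ k : Fin 3, fderiv ℝ v p ((0:ℝ), Pi.single j 1) k
          * fderiv ℝ s p ((0:ℝ), Pi.single k 1) := by
    intro j
    rw [transport hs hv hsinv p, apply0 (fderiv ℝ s p)]
    simp [smul_eq_mul]
  have hKH : ∀ j : Fin 3, fderiv ℝ (fderiv ℝ η) p ((1:ℝ), v p) ((0:ℝ), Pi.single j 1)
      = - ∑ k : Fin 3, fderiv ℝ v p ((0:ℝ), Pi.single j 1) k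
          * fderiv ℝ η p ((0:ℝ), Pi.single k 1) := by
    intro j
    rw [transport hη hv hηinv p, apply0 (fderiv ℝ η p)]
    simp [smul_eq_mul]
  rw [apply0 (fderiv ℝ v p) (g p • (crossProduct (a p) (b p)))]
  funext i
  fin_cases i <;>
  · simp only [hLcdef, hAdef, hBdef, hadef, hbdef, cross_apply, Fin.sum_univ_three,
      ContinuousLinearMap.add_apply, ContinuousLinearMap.smul_apply,
      ContinuousLinearMap.smulRight_apply, ContinuousLinearMap.sub_apply,
      ContinuousLinearMap.pi_apply, ContinuousLinearMap.flip_apply,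
      Matrix.cons_val_zero, Matrix.cons_val_one, Matrix.head_cons, Matrix.cons_val_two,
      Fin.reduceFinMk, Fin.isValue, Matrix.tail_cons, Pi.add_apply, Pi.smul_apply, Pi.sub_apply, smul_eq_mul,
      hKS, hKH, hDgW]
    ring
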